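/- Let (X, dist) be a metric space, let E ⊆ X be a finite set, let R > 0 and r₀ ≥ 1/R. For each integer u ≥ 0, let Ê(u) be the set of all x ∈ E for which there exists a closed ball B = B̄(c, r) with 1/R ≤ r ≤ r₀, x ∈ B, and #(E ∩ B) ≥ R·2^u·r, and set E(u) = Ê(u) ∖ ⋃_{u' > u} Ê(u'). Then: (i) E is the disjoint union of the sets E(u), u ≥ 0 (and E(u) is empty once 2^u > #E); (ii) for every integer u ≥ 0 and every closed ball B of radius r with 1/R ≤ r ≤ r₀, one has #(E(u) ∩ B) ≤ 2·R·2^u·r. -/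

import Mathlib

/-!
A point `x ∈ E` lies in `Ê(0)`, witnessed by the ball `B̄(x, 1/R)`, and in no `Ê(u)` with
`2^u > #E`, since such a ball would need more than `#E` points. So there is a largest `u` with
`x ∈ Ê(u)`, and `E(u)` is exactly the set of points for which this largest index is `u`.
If `x ∈ E(u)` lies in an admissible ball `B` of radius `r`, then `x ∉ Ê(u+1)` forces
`#(E ∩ B) < R·2^(u+1)·r`, which bounds `#(E(u) ∩ B)`.
-/

open Metric Set

/-- `Ê(u)`: the set of points of `E` contained in some closed ball `B̄(c,r)` with
`1/R ≤ r ≤ r₀` and `#(E ∩ B̄(c,r)) ≥ R·2^u·r`. -/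
def EhatSet {X : Type*} [MetricSpace X] (E : Set X) (R r₀ : ℝ) (u : ℕ) : Set X :=
  {x ∈ E | ∃ (c : X) (r : ℝ), 1 / R ≤ r ∧ r ≤ r₀ ∧ x ∈ Metric.closedBall c r ∧
      R * 2 ^ u * r ≤ ((E ∩ Metric.closedBall c r).ncard : ℝ)}

/-- `E(u) = Ê(u) ∖ ⋃_{u' > u} Ê(u')`. -/
def EpartSet {X : Type*} [MetricSpace X] (E : Set X) (R r₀ : ℝ) (u : ℕ) : Set X :=
  EhatSet E R r₀ u \ ⋃ (u' : ℕ) (_ : u < u'), EhatSet E R r₀ u'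

section TopIndex

open Function

variable {α : Type*}

theorem pairwise_disjoint_sdiff_iUnion_gt (A : ℕ → Set α) :
    Pairwise (Disjoint on fun u => A u \ ⋃ (u' : ℕ) (_ : u < u'), A u') := by
  refine (pairwise_disjoint_on _).2 fun u v huv => disjoint_left.2 ?_
  rintro x ⟨-, hx_not⟩ ⟨hx_v, -⟩
  exact hx_not (mem_biUnion huv hx_v)

theorem exists_mem_sdiff_iUnion_gt {A : ℕ → Set α} {x : α} {n : ℕ} (hn : x ∈ A n)
    (hbdd : BddAbove {u | x ∈ A u}) : ∃ u, x ∈ A u \ ⋃ (u' : ℕ) (_ : u < u'), A u' := by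
  refine ⟨sSup {u | x ∈ A u}, Nat.sSup_mem ⟨n, hn⟩ hbdd, ?_⟩
  simp only [mem_iUnion, not_exists]
  exact fun u' hlt hu' => (le_csSup hbdd hu').not_gt hlt

end TopIndex

section DensityDecomposition

variable {X : Type*} [MetricSpace X] {E : Set X} {R r₀ : ℝ}

theorem EhatSet_subset (u : ℕ) : EhatSet E R r₀ u ⊆ E := fun _ hx => hx.1

theorem EhatSet_eq_empty (hE : E.Finite) (hR : 0 < R) {u : ℕ} (hu : (E.ncard : ℝ) < 2 ^ u) :
    EhatSet E R r₀ u = ∅ := by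
  refine eq_empty_of_forall_notMem ?_
  rintro x ⟨-, c, r, hr, -, -, hcount⟩
  have hball : ((E ∩ closedBall c r).ncard : ℝ) ≤ E.ncard := by
    exact_mod_cast ncard_le_ncard inter_subset_left hE
  have hmass : (2 : ℝ) ^ u ≤ R * 2 ^ u * r := by
    calc (2 : ℝ) ^ u = R * 2 ^ u * (1 / R) := by field_simp
      _ ≤ R * 2 ^ u * r := by gcongr
  linarith

theorem bddAbove_setOf_mem_EhatSet (hE : E.Finite) (hR : 0 < R) (x : X) :
    BddAbove {u | x ∈ EhatSet E R r₀ u} := by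
  refine ⟨E.ncard, fun u hu => ?_⟩
  by_contra! hlt
  have hpow : (E.ncard : ℝ) < 2 ^ u := by
    exact_mod_cast (Nat.lt_two_pow_self).trans (Nat.pow_lt_pow_right one_lt_two hlt)
  rwa [mem_ofPred_eq, EhatSet_eq_empty hE hR hpow] at hu

theorem mem_EhatSet_zero (hE : E.Finite) (hR : 0 < R) (hr₀ : 1 / R ≤ r₀) {x : X}
    (hx : x ∈ E) : x ∈ EhatSet E R r₀ 0 := by
  have hx_ball : x ∈ closedBall x (1 / R) := mem_closedBall_self (by positivity)
  have hcount : 1 ≤ (E ∩ closedBall x (1 / R)).ncard :=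
    (ncard_pos (hE.subset inter_subset_left)).2 ⟨x, hx, hx_ball⟩
  refine ⟨hx, x, 1 / R, le_rfl, hr₀, hx_ball, ?_⟩
  calc R * 2 ^ 0 * (1 / R) = 1 := by field_simp
    _ ≤ _ := by exact_mod_cast hcount

theorem iUnion_EpartSet (hE : E.Finite) (hR : 0 < R) (hr₀ : 1 / R ≤ r₀) :
    ⋃ u, EpartSet E R r₀ u = E := by
  refine Subset.antisymm (iUnion_subset fun u => sdiff_subset.trans (EhatSet_subset u)) ?_
  intro x hx
  exact mem_iUnion.2 <| exists_mem_sdiff_iUnion_gt (mem_EhatSet_zero hE hR hr₀ hx)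
    (bddAbove_setOf_mem_EhatSet hE hR x)

theorem ncard_inter_closedBall_lt_of_mem_EpartSet {u : ℕ} {x c : X} {r : ℝ}
    (hx : x ∈ EpartSet E R r₀ u) (hx_ball : x ∈ closedBall c r) (hr : 1 / R ≤ r)
    (hr' : r ≤ r₀) : ((E ∩ closedBall c r).ncard : ℝ) < 2 * R * 2 ^ u * r := by
  by_contra! hcount
  refine hx.2 (mem_biUnion (Nat.lt_succ_self u) ⟨hx.1.1, c, r, hr, hr', hx_ball, ?_⟩)
  calc R * 2 ^ (u + 1) * r = 2 * R * 2 ^ u * r := by ring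
    _ ≤ _ := hcount

theorem ncard_EpartSet_inter_closedBall_le (hE : E.Finite) (hR : 0 < R) (u : ℕ) (c : X)
    {r : ℝ} (hr : 1 / R ≤ r) (hr' : r ≤ r₀) :
    ((EpartSet E R r₀ u ∩ closedBall c r).ncard : ℝ) ≤ 2 * R * 2 ^ u * r := by
  rcases (EpartSet E R r₀ u ∩ closedBall c r).eq_empty_or_nonempty with hempty | ⟨x, hx, hx_ball⟩
  · have hr_pos : 0 < r := lt_of_lt_of_le (by positivity) hr
    rw [hempty, ncard_empty, Nat.cast_zero]
    positivity
  · have hsub : EpartSet E R r₀ u ∩ closedBall c r ⊆ E ∩ closedBall c r :=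
      inter_subset_inter_left _ (sdiff_subset.trans (EhatSet_subset u))
    calc ((EpartSet E R r₀ u ∩ closedBall c r).ncard : ℝ)
        ≤ (E ∩ closedBall c r).ncard := by
          exact_mod_cast ncard_le_ncard hsub (hE.subset inter_subset_left)
      _ ≤ 2 * R * 2 ^ u * r :=
          (ncard_inter_closedBall_lt_of_mem_EpartSet hx hx_ball hr hr').le

end DensityDecomposition

/-- Density decomposition: a finite set `E` in a metric space is the disjoint union of the
sets `E(u)`, `u ≥ 0` (with `E(u) = ∅` once `2^u > #E`), and each `E(u)` has controlled
density: `#(E(u) ∩ B̄(c,r)) ≤ 2·R·2^u·r` for every closed ball of radius `1/R ≤ r ≤ r₀`. -/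
theorem statement11 {X : Type*} [MetricSpace X] (E : Set X) (hE : E.Finite)
    (R r₀ : ℝ) (hR : 0 < R) (hr₀ : 1 / R ≤ r₀) :
    (⋃ u : ℕ, EpartSet E R r₀ u) = E ∧
    (∀ u v : ℕ, u ≠ v → Disjoint (EpartSet E R r₀ u) (EpartSet E R r₀ v)) ∧
    (∀ u : ℕ, (E.ncard : ℝ) < 2 ^ u → EpartSet E R r₀ u = ∅) ∧
    (∀ (u : ℕ) (c : X) (r : ℝ), 1 / R ≤ r → r ≤ r₀ →
      ((EpartSet E R r₀ u ∩ Metric.closedBall c r).ncard : ℝ) ≤ 2 * R * 2 ^ u * r) := by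
  refine ⟨iUnion_EpartSet hE hR hr₀, fun u v huv => ?_, fun u hu => ?_,
    fun u c r hr hr' => ncard_EpartSet_inter_closedBall_le hE hR u c hr hr'⟩
  · exact pairwise_disjoint_sdiff_iUnion_gt (EhatSet E R r₀) huv
  · rw [EpartSet, EhatSet_eq_empty hE hR hu, empty_sdiff]
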